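/- arXiv:1603.09485 — 5 statements merged into one kernel-verified Lean document; each statement's English description precedes it below -/
import Mathlib

section
/- Let u, v : ℤ → {0,1} be bi-infinite binary words. Then for all integers p ≤ q the number of indices i with p ≤ i ≤ q and u(i) = 0 differs from the number of indices i with p ≤ i ≤ q and v(i) = 0 by at most 1, if and only if the positions where u and v differ have alternating types, i.e., for every pair of integers i < j with u(i) ≠ v(i), u(j) ≠ v(j), and u(k) = v(k) for all k with i < k < j, one has u(i) ≠ u(j). -/
/-!
Write `zeroCount u p q - zeroCount v p q` as the window sum of `zeroBalance u v`, a sequence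
with values in `{-1, 0, 1}` that vanishes exactly where `u` and `v` agree; at a mismatch its
sign is determined by the letter of `u`. So alternation of mismatch types says that
consecutive nonzero terms cancel. If they do, every window sum is `0` or the last nonzero
term of the window, hence at most `1` in absolute value. Conversely, the window between two
consecutive mismatches has sum equal to the sum of the two terms, which is `0` or `±2`.
-/

/-- Bi-infinite binary words are functions `ℤ → Bool`, where `false` stands for the
letter 0 and `true` for the letter 1.  `zeroCount u p q` is the number of indices
`i` with `p ≤ i ≤ q` and `u i = 0`, as an integer. -/
noncomputable def zeroCount (u : ℤ → Bool) (p q : ℤ) : ℤ :=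
  ((Finset.Icc p q).filter (fun i => u i = false)).card

open Finset

section ConsecutiveNonzeroCancel

variable {M : Type*} [AddCommMonoid M]

def ConsecutiveNonzeroCancel (d : ℤ → M) : Prop :=
  ∀ i j : ℤ, i < j → d i ≠ 0 → d j ≠ 0 → (∀ k, i < k → k < j → d k = 0) → d i + d j = 0

lemma sum_Icc_eq_add_of_eq_zero_between (d : ℤ → M) {i j : ℤ} (hij : i < j)
    (h : ∀ k, i < k → k < j → d k = 0) : ∑ k ∈ Icc i j, d k = d i + d j :=
  sum_eq_add_of_mem i j (by simp [hij.le]) (by simp [hij.le]) hij.ne fun k hk hne => by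
    rw [mem_Icc] at hk
    exact h k (by omega) (by omega)

lemma ConsecutiveNonzeroCancel.sum_Icc_eq_zero_or_eq_last {d : ℤ → M}
    (hd : ConsecutiveNonzeroCancel d) (p q : ℤ) :
    ∑ i ∈ Icc p q, d i = 0 ∨
      ∃ m ≤ q, ∑ i ∈ Icc p q, d i = d m ∧ ∀ k, m < k → k ≤ q → d k = 0 := by
  rcases lt_or_ge q p with hqp | hpq
  · simp [Icc_eq_empty_of_lt hqp]
  induction q, hpq using Int.leInduction with
  | base => exact .inr ⟨p, le_rfl, by simp, fun k _ _ => by omega⟩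
  | succ n hpn ih =>
    have hsum : ∑ i ∈ Icc p (n + 1), d i = ∑ i ∈ Icc p n, d i + d (n + 1) := by
      rw [← insert_Icc_right_eq_Icc_add_one (by omega), sum_insert (by simp), add_comm]
    by_cases hn : d (n + 1) = 0
    · rw [hsum, hn, add_zero]
      refine ih.imp_right fun ⟨m, hmn, hm, hzero⟩ => ⟨m, by omega, hm, fun k hmk hkn => ?_⟩
      rcases (show k ≤ n ∨ k = n + 1 by omega) with hkn | rfl
      exacts [hzero k hmk hkn, hn]
    by_cases hS : ∑ i ∈ Icc p n, d i = 0
    · exact .inr ⟨n + 1, le_rfl, by rw [hsum, hS, zero_add], fun k _ _ => by omega⟩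
    obtain ⟨m, hmn, hm, hzero⟩ := ih.resolve_left hS
    refine .inl ?_
    rw [hsum, hm]
    exact hd m (n + 1) (by omega) (hm ▸ hS) hn fun k hmk hkn => hzero k hmk (by omega)

end ConsecutiveNonzeroCancel

lemma ConsecutiveNonzeroCancel.abs_sum_Icc_le_one {d : ℤ → ℤ} (hd : ConsecutiveNonzeroCancel d)
    (h1 : ∀ i, |d i| ≤ 1) (p q : ℤ) : |∑ i ∈ Icc p q, d i| ≤ 1 := by
  obtain h | ⟨m, -, h, -⟩ := hd.sum_Icc_eq_zero_or_eq_last p q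
  · simp [h]
  · exact h ▸ h1 m

theorem abs_sum_Icc_le_one_iff {d : ℤ → ℤ} (h1 : ∀ i, |d i| ≤ 1) :
    (∀ p q, p ≤ q → |∑ i ∈ Icc p q, d i| ≤ 1) ↔ ConsecutiveNonzeroCancel d := by
  refine ⟨fun H i j hij hi hj hmid => ?_, fun hd p q _ => hd.abs_sum_Icc_le_one h1 p q⟩
  have hsum := abs_le.mp (sum_Icc_eq_add_of_eq_zero_between d hij hmid ▸ H i j hij.le)
  have := abs_le.mp (h1 i)
  have := abs_le.mp (h1 j)
  omega

section Words

variable (u v : ℤ → Bool)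

def zeroBalance (i : ℤ) : ℤ :=
  (if u i = false then 1 else 0) - (if v i = false then 1 else 0)

lemma zeroCount_sub_zeroCount (p q : ℤ) :
    zeroCount u p q - zeroCount v p q = ∑ i ∈ Icc p q, zeroBalance u v i := by
  simp only [zeroCount, zeroBalance, card_filter, Nat.cast_sum, Nat.cast_ite, Nat.cast_one,
    Nat.cast_zero, sum_sub_distrib]

lemma abs_zeroBalance_le_one (i : ℤ) : |zeroBalance u v i| ≤ 1 := by
  unfold zeroBalance
  cases u i <;> cases v i <;> decide

lemma zeroBalance_eq_zero_iff (i : ℤ) : zeroBalance u v i = 0 ↔ u i = v i := by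
  unfold zeroBalance
  cases u i <;> cases v i <;> decide

lemma zeroBalance_add_eq_zero_iff {i j : ℤ} (hi : u i ≠ v i) (hj : u j ≠ v j) :
    zeroBalance u v i + zeroBalance u v j = 0 ↔ u i ≠ u j := by
  revert hi hj
  unfold zeroBalance
  cases u i <;> cases v i <;> cases u j <;> cases v j <;> decide

end Words

/-- Two bi-infinite binary words are at distance at most one (their balance over every
common finite window is at most 1) if and only if the positions where they differ have
alternating types. -/
theorem balance_le_one_iff_alternating (u v : ℤ → Bool) :
    (∀ p q : ℤ, p ≤ q → |zeroCount u p q - zeroCount v p q| ≤ 1) ↔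
    (∀ i j : ℤ, i < j → u i ≠ v i → u j ≠ v j →
      (∀ k : ℤ, i < k → k < j → u k = v k) → u i ≠ u j) := by
  simp_rw [zeroCount_sub_zeroCount, abs_sum_Icc_le_one_iff (abs_zeroBalance_le_one u v),
    ConsecutiveNonzeroCancel, ne_eq, zeroBalance_eq_zero_iff]
  exact forall₄_congr fun i j _ hi => forall₂_congr fun hj _ =>
    zeroBalance_add_eq_zero_iff u v hi hj
end

section
/- Let α ∈ [0,1] and let ρ, ρ' ∈ [0,1]. Then the Sturmian words s_{α,ρ} and s_{α,ρ'} are at distance at most one: for all integers p ≤ q, the number of indices i with p ≤ i ≤ q and s_{α,ρ}(i) = 0 differs from the number of indices i with p ≤ i ≤ q and s_{α,ρ'}(i) = 0 by at most 1. -/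
open Classical in
/-- The Sturmian word of slope `α` and intercept `ρ`: the letter at position `n` is
`0` (i.e. `false`) iff the fractional part of `ρ + n·α` lies in `[0, 1 - α)`. -/
noncomputable def sturmian (α ρ : ℝ) (n : ℤ) : Bool :=
  if Int.fract (ρ + n * α) < 1 - α then false else true

theorem Int.floor_add_sub_floor_eq_ite {α : ℝ} (h0 : 0 ≤ α) (h1 : α ≤ 1) (x : ℝ) :
    ⌊x + α⌋ - ⌊x⌋ = if Int.fract x < 1 - α then 0 else 1 := by
  have hsplit : x + α = (Int.fract x + α) + ⌊x⌋ := by rw [Int.fract]; ring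
  rw [hsplit, Int.floor_add_intCast, add_sub_cancel_right, Int.floor_eq_iff]
  have := Int.fract_nonneg x
  have := Int.fract_lt_one x
  split_ifs <;> push_cast <;> constructor <;> linarith

theorem Int.floor_add_sub_floor_add_mem_Icc (a b x : ℝ) :
    ⌊b + x⌋ - ⌊a + x⌋ ∈ Set.Icc ⌊b - a⌋ (⌊b - a⌋ + 1) := by
  have hb : b + x = (b - a) + (a + x) := by ring
  have := Int.le_floor_add (b - a) (a + x)
  have := Int.le_floor_add_floor (b - a) (a + x)
  rw [← hb] at *
  constructor <;> omega

theorem zeroCount_add_one (u : ℤ → Bool) {p q : ℤ} (h : p ≤ q + 1) :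
    zeroCount u p (q + 1) = zeroCount u p q + if u (q + 1) = false then 1 else 0 := by
  rw [zeroCount, zeroCount, ← Finset.insert_Icc_right_eq_Icc_add_one h, Finset.filter_insert]
  split_ifs
  · rw [Finset.card_insert_of_notMem (by simp)]; push_cast; ring
  · simp

theorem ite_sturmian_eq_false {α : ℝ} (h0 : 0 ≤ α) (h1 : α ≤ 1) (ρ : ℝ) (n : ℤ) :
    (if sturmian α ρ n = false then 1 else 0 : ℤ) =
      1 - (⌊ρ + (n + 1) * α⌋ - ⌊ρ + n * α⌋) := by
  rw [show ρ + (n + 1) * α = (ρ + n * α) + α by ring, Int.floor_add_sub_floor_eq_ite h0 h1,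
    sturmian]
  split_ifs <;> simp_all

theorem zeroCount_sturmian {α : ℝ} (h0 : 0 ≤ α) (h1 : α ≤ 1) (ρ : ℝ) {p q : ℤ} (h : p - 1 ≤ q) :
    zeroCount (sturmian α ρ) p q = (q + 1 - p) - (⌊ρ + (q + 1) * α⌋ - ⌊ρ + p * α⌋) := by
  induction q, h using Int.leInduction with
  | base => simp [zeroCount]
  | succ q hq ih =>
    rw [zeroCount_add_one _ (by omega), ih, ite_sturmian_eq_false h0 h1]
    push_cast
    ring

theorem sturmian_same_slope_balance_le_one_general (α ρ ρ' : ℝ)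
    (hα : α ∈ Set.Icc (0 : ℝ) 1) :
    ∀ p q : ℤ, p ≤ q →
      |zeroCount (sturmian α ρ) p q - zeroCount (sturmian α ρ') p q| ≤ 1 := by
  intro p q hpq
  obtain ⟨h0, h1⟩ := hα
  rw [zeroCount_sturmian h0 h1 ρ (by omega), zeroCount_sturmian h0 h1 ρ' (by omega)]
  obtain ⟨hq₀, hq₁⟩ := Int.floor_add_sub_floor_add_mem_Icc ρ ρ' ((q + 1) * α)
  obtain ⟨hp₀, hp₁⟩ := Int.floor_add_sub_floor_add_mem_Icc ρ ρ' (p * α)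
  rw [abs_le]
  constructor <;> linarith

/-- Two Sturmian words with the same slope are at distance at most one. -/
theorem sturmian_same_slope_balance_le_one (α ρ ρ' : ℝ)
    (hα : α ∈ Set.Icc (0 : ℝ) 1) (hρ : ρ ∈ Set.Icc (0 : ℝ) 1)
    (hρ' : ρ' ∈ Set.Icc (0 : ℝ) 1) :
    ∀ p q : ℤ, p ≤ q →
      |zeroCount (sturmian α ρ) p q - zeroCount (sturmian α ρ') p q| ≤ 1 :=
  sturmian_same_slope_balance_le_one_general α ρ ρ' hα
end

section
/- Let u, v : ℤ → {0,1}. Suppose (1) u is balanced: for all integers p, p' and all r ≥ 0, the number of indices i with p ≤ i ≤ p + r and u(i) = 0 differs from the number of indices i with p' ≤ i ≤ p' + r and u(i) = 0 by at most 1; and (2) every finite factor of v is also a factor of u: for all integers p ≤ q there exists an integer p' such that v(p + i) = u(p' + i) for all 0 ≤ i ≤ q − p. Then u and v are at distance at most one: for all integers p ≤ q, the number of indices i with p ≤ i ≤ q and u(i) = 0 differs from the number of indices i with p ≤ i ≤ q and v(i) = 0 by at most 1. -/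
lemma zeroCount_eq_of_factor (u v : ℤ → Bool) (p q p' : ℤ)
    (h : ∀ i : ℤ, 0 ≤ i → i ≤ q - p → v (p + i) = u (p' + i)) :
    zeroCount v p q = zeroCount u p' (p' + (q - p)) := by
  unfold zeroCount
  congr 1
  refine Finset.card_nbij' (· + (p' - p)) (· - (p' - p)) ?_ ?_
    (fun _ _ => by ring) (fun _ _ => by ring)
  · intro i hi
    simp only [Finset.coe_filter, Finset.mem_Icc, Set.mem_ofPred_eq] at hi ⊢
    have hvu := h (i - p) (by omega) (by omega)
    rw [add_sub_cancel] at hvu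
    refine ⟨by omega, ?_⟩
    rw [show i + (p' - p) = p' + (i - p) by ring, ← hvu, hi.2]
  · intro j hj
    simp only [Finset.coe_filter, Finset.mem_Icc, Set.mem_ofPred_eq] at hj ⊢
    have hvu := h (j - p') (by omega) (by omega)
    rw [add_sub_cancel] at hvu
    refine ⟨by omega, ?_⟩
    rw [show j - (p' - p) = p + (j - p') by ring, hvu, hj.2]

/-- If `u` is balanced and every finite factor of `v` is a factor of `u`, then `u` and
`v` are at distance at most one. -/
theorem balance_le_one_of_balanced_of_factors (u v : ℤ → Bool)
    (hbal : ∀ p p' : ℤ, ∀ r : ℕ,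
      |zeroCount u p (p + r) - zeroCount u p' (p' + r)| ≤ 1)
    (hfac : ∀ p q : ℤ, p ≤ q → ∃ p' : ℤ,
      ∀ i : ℤ, 0 ≤ i → i ≤ q - p → v (p + i) = u (p' + i)) :
    ∀ p q : ℤ, p ≤ q → |zeroCount u p q - zeroCount v p q| ≤ 1 := by
  intro p q hpq
  obtain ⟨p', hfactor⟩ := hfac p q hpq
  obtain ⟨r, hr⟩ := Int.eq_ofNat_of_zero_le (sub_nonneg.mpr hpq)
  have hq : q = p + r := by omega
  rw [zeroCount_eq_of_factor u v p q p' hfactor, hr, hq]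
  exact hbal p p' r
end

section
/- Let A ⊆ [0,1] be a set containing at least one irrational number. Then for every natural number n ≥ 1 there exist a natural number d ≥ 1 and a configuration x ∈ S''_A such that for every (a,b) ∈ ℤ², there exist n^n points p_1, …, p_{n^n} ∈ ℤ² with the following properties: for each k, the n×n square {(p_k.1 + i, p_k.2 + j) : 0 ≤ i,j < n} is contained in the d×d square {(a + i, b + j) : 0 ≤ i,j < d}; these n×n squares are pairwise disjoint; and the n×n patterns of x at these positions are pairwise distinct, i.e., the functions (i,j) ↦ x(p_k.1 + i, p_k.2 + j) on {0,…,n−1}² are pairwise different for k = 1, …, n^n. -/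
/-- The subshift `S''_A`: configurations `x : ℤ × ℤ → Bool` all of whose rows are
Sturmian words of a common slope `α ∈ A`, with possibly different intercepts. -/
def sturmianRows (A : Set ℝ) : Set (ℤ × ℤ → Bool) :=
  {x | ∃ α ∈ A, ∀ m : ℤ, ∃ ρ ∈ Set.Icc (0 : ℝ) 1, ∀ n : ℤ, x (m, n) = sturmian α ρ n}

/-- The `m × m` square with lower-left corner `c` in `ℤ²`. -/
def square (c : ℤ × ℤ) (m : ℕ) : Set (ℤ × ℤ) :=
  {q | c.1 ≤ q.1 ∧ q.1 < c.1 + m ∧ c.2 ≤ q.2 ∧ q.2 < c.2 + m}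


/-!
Fix an irrational `α ∈ A`. Row `r` of `x` is the Sturmian word of slope `α` with intercept
`-t(r) α` for a shift `t(r) < n`. The `n` shifted words already differ on `[0, n)`: on a window
of length `m` their letters `1` number `⌊mα⌋` and `⌈mα⌉`. A letter is right-continuous in the
intercept, so all these words keep their first `n` letters at each column `c` with `fract (c α)`
small enough, and by Dirichlet's theorem such columns occur with bounded gaps. The shifts `t(r)`
are chosen so that any `nⁿ` consecutive blocks of `n` rows carry all `nⁿ` words `Fin n → Fin n`.
-/

open Filter Topology

lemma sturmian_fract_intercept (α ρ : ℝ) (n : ℤ) :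
    sturmian α (Int.fract ρ) n = sturmian α ρ n := by
  have h : Int.fract ρ + n * α = ρ + n * α - ⌊ρ⌋ := by rw [Int.fract]; ring
  rw [sturmian, sturmian, h, Int.fract_sub_intCast]

lemma sturmian_intCast_add (α ρ : ℝ) (c n : ℤ) :
    sturmian α ρ (c + n) = sturmian α (ρ + Int.fract (c * α)) n := by
  have h : ρ + ((c + n : ℤ) : ℝ) * α = ρ + Int.fract (c * α) + n * α + ⌊(c : ℝ) * α⌋ := by
    have := Int.floor_add_fract ((c : ℝ) * α)
    push_cast
    linarith
  rw [sturmian, sturmian, h, Int.fract_add_intCast]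

lemma sturmian_toNat (α ρ : ℝ) (n : ℤ) (h0 : 0 ≤ α) (h1 : α < 1) :
    ((sturmian α ρ n).toNat : ℤ) = ⌊ρ + (n + 1) * α⌋ - ⌊ρ + n * α⌋ := by
  have hy : ρ + (n + 1) * α = ⌊ρ + n * α⌋ + (Int.fract (ρ + n * α) + α) := by
    rw [← add_assoc, Int.floor_add_fract]; ring
  rw [hy, Int.floor_intCast_add, add_sub_cancel_left, sturmian, eq_comm, Int.floor_eq_iff]
  have := Int.fract_nonneg (ρ + n * α)
  have := Int.fract_lt_one (ρ + n * α)
  split_ifs <;> simp only [Bool.toNat_false, Bool.toNat_true, Nat.cast_zero, Nat.cast_one,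
    Int.cast_zero, Int.cast_one] <;> constructor <;> linarith

lemma sum_range_sturmian_toNat (α ρ : ℝ) (a : ℤ) (m : ℕ) (h0 : 0 ≤ α) (h1 : α < 1) :
    ∑ i ∈ Finset.range m, ((sturmian α ρ (a + i)).toNat : ℤ) =
      ⌊ρ + (a + m) * α⌋ - ⌊ρ + a * α⌋ := by
  rw [Finset.sum_congr rfl fun (i : ℕ) _ => sturmian_toNat α ρ (a + i) h0 h1]
  have := Finset.sum_range_sub (fun i : ℕ => ⌊ρ + (a + i) * α⌋) m
  push_cast at this ⊢
  simpa only [add_assoc, Nat.cast_zero, add_zero] using this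

lemma Irrational.exists_sturmian_neg_mul_ne {α : ℝ} (hα : Irrational α) (h0 : 0 ≤ α) (h1 : α < 1)
    {t s : ℤ} (hts : t < s) :
    ∃ j, t ≤ j ∧ j < s ∧ sturmian α (-(t * α)) j ≠ sturmian α (-(s * α)) j := by
  by_contra! h
  obtain ⟨m, rfl⟩ := Int.le.dest hts.le
  have hm : m ≠ 0 := by rintro rfl; simp at hts
  -- on `[t, t + m)` the first word has `⌊mα⌋` letters `1` and the second `⌈mα⌉ ≠ ⌊mα⌋`
  have hsum := Finset.sum_congr rfl fun (i : ℕ) (hi : i ∈ Finset.range m) =>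
    congrArg (fun w : Bool => (w.toNat : ℤ)) (h (t + i) (by omega) (by simp at hi; omega))
  rw [sum_range_sturmian_toNat _ _ _ _ h0 h1, sum_range_sturmian_toNat _ _ _ _ h0 h1] at hsum
  have e1 : -(t * α) + (t + m) * α = m * α := by ring
  have e2 : -((((t + m : ℤ)) : ℝ) * α) + (t + m) * α = 0 := by push_cast; ring
  have e3 : -((((t + m : ℤ)) : ℝ) * α) + t * α = -(m * α) := by push_cast; ring
  rw [e1, e2, e3, neg_add_cancel, Int.floor_zero] at hsum
  have hfloor : (⌊(m : ℝ) * α⌋ : ℝ) = -⌊-((m : ℝ) * α)⌋ := by exact_mod_cast (by linarith : _)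
  have := Int.floor_le ((m : ℝ) * α)
  have := Int.floor_le (-((m : ℝ) * α))
  exact (hα.natCast_mul hm).ne_int ⌊(m : ℝ) * α⌋ (by linarith)

lemma Irrational.injective_sturmian_fract_neg_mul {α : ℝ} (hα : Irrational α) (h0 : 0 ≤ α)
    (h1 : α < 1) (n : ℕ) :
    Function.Injective fun (t j : Fin n) => sturmian α (Int.fract (-(t * α))) j := by
  have key : ∀ t s : Fin n, t < s →
      (fun j : Fin n => sturmian α (Int.fract (-(t * α))) j) ≠
        fun j : Fin n => sturmian α (Int.fract (-(s * α))) j := by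
    intro t s hts heq
    obtain ⟨j, htj, hjs, hne⟩ :=
      hα.exists_sturmian_neg_mul_ne h0 h1 (Int.ofNat_lt.2 (Fin.lt_def.1 hts))
    lift j to ℕ using (Int.natCast_nonneg _).trans htj
    have := congrFun heq ⟨j, by omega⟩
    simp only [sturmian_fract_intercept] at this
    exact hne (by exact_mod_cast this)
  intro t s heq
  by_contra hne
  rcases Fin.lt_or_lt_of_ne hne with h | h
  · exact key t s h heq
  · exact key s t h heq.symm

lemma eventually_sturmian_add_eq (α ρ : ℝ) (n : ℤ) :
    ∀ᶠ e in 𝓝[≥] (0 : ℝ), sturmian α (ρ + e) n = sturmian α ρ n := by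
  set u := Int.fract (ρ + n * α)
  have hlt : ∀ {c : ℝ}, 0 < c → ∀ᶠ e in 𝓝[≥] (0 : ℝ), e < c :=
    fun hc => nhdsWithin_le_nhds (eventually_lt_nhds hc)
  have hbelow : ∀ᶠ e in 𝓝[≥] (0 : ℝ), u < 1 - α → e < 1 - α - u := by
    by_cases hu : u < 1 - α
    · filter_upwards [hlt (sub_pos.2 hu)] with e he using fun _ => he
    · exact Eventually.of_forall fun _ h => absurd h hu
  filter_upwards [self_mem_nhdsWithin, hlt (sub_pos.2 (Int.fract_lt_one _ : u < 1)), hbelow]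
    with e (he : 0 ≤ e) hu1 hu2
  have hfract : Int.fract (ρ + e + n * α) = u + e := by
    rw [Int.fract_eq_iff]
    refine ⟨by positivity, by linarith, ⌊ρ + n * α⌋, ?_⟩
    rw [← Int.self_sub_fract]
    ring
  simp only [sturmian, hfract]
  by_cases hu : u < 1 - α
  · rw [if_pos hu, if_pos (by linarith [hu2 hu])]
  · rw [if_neg hu, if_neg (by linarith)]

lemma Irrational.exists_int_abs_mul_sub_lt {α : ℝ} (hα : Irrational α) {δ : ℝ} (hδ : 0 < δ) :
    ∃ q p : ℤ, 0 < q ∧ q * α - p ≠ 0 ∧ |q * α - p| < δ := by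
  obtain ⟨N, hN⟩ := exists_nat_one_div_lt hδ
  obtain ⟨p, q, hq, -, hqp⟩ := Real.exists_int_int_abs_mul_sub_le α N.succ_pos
  refine ⟨q, p, hq, sub_ne_zero.2 ((hα.intCast_mul hq.ne').ne_int p), hqp.trans_lt ?_⟩
  calc 1 / ((N.succ : ℕ) + 1 : ℝ) ≤ 1 / (N + 1) := by gcongr; linarith
    _ < δ := hN

lemma exists_nat_le_fract_add_mul_lt {β : ℝ} (hβ : β ≠ 0) (v : ℝ) :
    ∃ j : ℕ, j ≤ ⌈|β|⁻¹⌉₊ ∧ Int.fract (v + j * β) < |β| := by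
  suffices h : ∃ j : ℕ, j ≤ ⌈|β|⁻¹⌉₊ ∧ ∃ k : ℤ, 0 ≤ v + j * β - k ∧ v + j * β - k < |β| by
    obtain ⟨j, hj, k, hk0, hk1⟩ := h
    refine ⟨j, hj, ?_⟩
    have hfloor : (0 : ℝ) ≤ ⌊v + j * β - k⌋ := Int.cast_nonneg (Int.floor_nonneg.2 hk0)
    calc Int.fract (v + j * β) = Int.fract (v + j * β - k) := (Int.fract_sub_intCast _ _).symm
      _ ≤ v + j * β - k := by rw [Int.fract]; linarith
      _ < |β| := hk1
  have hv0 := Int.fract_nonneg v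
  have hv1 := Int.fract_lt_one v
  rcases hβ.lt_or_gt with hneg | hpos
  · set j := ⌊Int.fract v / -β⌋₊
    have hj0 : j * -β ≤ Int.fract v :=
      (le_div_iff₀ (neg_pos.2 hneg)).1 (Nat.floor_le (div_nonneg hv0 (neg_pos.2 hneg).le))
    have hj1 : Int.fract v < (j + 1) * -β :=
      (div_lt_iff₀ (neg_pos.2 hneg)).1 (Nat.lt_floor_add_one _)
    refine ⟨j, (Nat.floor_le_ceil _).trans (Nat.ceil_mono ?_), ⌊v⌋, ?_, ?_⟩
    · rw [abs_of_neg hneg, inv_eq_one_div]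
      exact div_le_div_of_nonneg_right hv1.le (neg_pos.2 hneg).le
    · rw [← Int.self_sub_fract]; linarith
    · rw [abs_of_neg hneg, ← Int.self_sub_fract]; linarith
  · set j := ⌈(1 - Int.fract v) / β⌉₊
    have hj0 : 1 - Int.fract v ≤ j * β := (div_le_iff₀ hpos).1 (Nat.le_ceil _)
    have hj1 : j * β < 1 - Int.fract v + β := by
      have := Nat.ceil_lt_add_one (div_nonneg (sub_nonneg.2 hv1.le) hpos.le)
      rwa [div_add_one hpos.ne', lt_div_iff₀ hpos] at this
    refine ⟨j, Nat.ceil_mono ?_, ⌊v⌋ + 1, ?_, ?_⟩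
    · rw [abs_of_pos hpos, inv_eq_one_div]
      exact div_le_div_of_nonneg_right (by linarith) hpos.le
    · push_cast; rw [← Int.self_sub_fract]; linarith
    · push_cast; rw [abs_of_pos hpos, ← Int.self_sub_fract]; linarith

lemma Irrational.exists_forall_exists_fract_mul_mem {α : ℝ} (hα : Irrational α) {s : Set ℝ}
    (hs : s ∈ 𝓝[≥] (0 : ℝ)) :
    ∃ R : ℕ, ∀ b : ℤ, ∃ c ∈ Set.Icc b (b + R), Int.fract (c * α) ∈ s := by
  obtain ⟨δ, hδ, hδs⟩ := mem_nhdsGE_iff_exists_Ico_subset.1 hs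
  obtain ⟨q, p, hq, hβ, hβδ⟩ := hα.exists_int_abs_mul_sub_lt hδ
  refine ⟨⌈|q * α - p|⁻¹⌉₊ * q.toNat, fun b => ?_⟩
  obtain ⟨j, hj, hfract⟩ := exists_nat_le_fract_add_mul_lt hβ (b * α)
  have hjq : (j : ℤ) * q ≤ ⌈|q * α - p|⁻¹⌉₊ * q :=
    mul_le_mul_of_nonneg_right (by exact_mod_cast hj) hq.le
  refine ⟨b + j * q, ⟨by nlinarith, by push_cast [Int.toNat_of_nonneg hq.le]; linarith⟩,
    hδs ⟨Int.fract_nonneg _, ?_⟩⟩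
  have h : ((b + j * q : ℤ) : ℝ) * α = b * α + j * (q * α - p) + ((j * p : ℤ) : ℝ) := by
    push_cast; ring
  rw [h, Int.fract_add_intCast]
  exact hfract.trans hβδ

lemma Irrational.exists_forall_exists_sturmian_intCast_add_eq {α : ℝ} (hα : Irrational α)
    {ι : Type*} [Finite ι] (ρ : ι → ℝ) (n : ℕ) :
    ∃ R : ℕ, ∀ b : ℤ, ∃ c ∈ Set.Icc b (b + R),
      ∀ i (j : Fin n), sturmian α (ρ i) (c + j) = sturmian α (ρ i) j := by
  have hs : ∀ᶠ e in 𝓝[≥] (0 : ℝ), ∀ i (j : Fin n), sturmian α (ρ i + e) j = sturmian α (ρ i) j :=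
    eventually_all.2 fun i => eventually_all.2 fun j => eventually_sturmian_add_eq α (ρ i) j
  obtain ⟨R, hR⟩ := hα.exists_forall_exists_fract_mul_mem hs
  refine ⟨R, fun b => ?_⟩
  obtain ⟨c, hc, hcs⟩ := hR b
  exact ⟨c, hc, fun i j => (sturmian_intCast_add α (ρ i) c j).trans (hcs i j)⟩

/-- Row `n * B + i` (with `0 ≤ i < n`) carries the `i`-th base-`n` digit of `B mod nⁿ`, so that
any `nⁿ` consecutive blocks of `n` rows run through all words `Fin n → Fin n`. -/
def blockDigit (n : ℕ) (r : ℤ) : ℕ :=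
  ((r / n) % (n ^ n : ℕ)).toNat / n ^ (r % n).toNat % n

lemma blockDigit_mul_add {n : ℕ} (hn : 0 < n) (k : Fin (n ^ n)) (i : Fin n) {B : ℤ}
    (hB : B % (n ^ n : ℕ) = k) : blockDigit n (n * B + i) = finFunctionFinEquiv.symm k i := by
  obtain ⟨hdiv, hmod⟩ := (Int.ediv_emod_unique (b := n) (by exact_mod_cast hn)).2
    ⟨add_comm _ _, Int.natCast_nonneg _, by exact_mod_cast i.isLt⟩
  rw [blockDigit, hdiv, hmod, hB, finFunctionFinEquiv_symm_apply_val]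
  rfl

lemma exists_emod_eq_and_mul_mem {n N : ℕ} (hn : 0 < n) (a : ℤ) {k : ℕ} (hk : k < N) :
    ∃ B : ℤ, B % N = k ∧ a ≤ n * B ∧ n * B + n ≤ a + n * (N + 1) := by
  have hn' : (0 : ℤ) < n := by exact_mod_cast hn
  have hN' : (0 : ℤ) < N := by exact_mod_cast Nat.zero_lt_of_lt hk
  refine ⟨a / n + 1 + (k - (a / n + 1)) % N, ?_, ?_, ?_⟩
  · rw [Int.add_emod_emod, add_sub_cancel, Int.emod_eq_of_lt (Int.natCast_nonneg _)
      (by exact_mod_cast hk)]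
  · nlinarith [Int.lt_mul_ediv_self_add (x := a) hn', Int.emod_nonneg (k - (a / n + 1)) hN'.ne']
  · nlinarith [Int.mul_ediv_self_le (x := a) hn'.ne', Int.emod_lt_of_pos (k - (a / n + 1)) hN']

lemma square_subset_square {c c' : ℤ × ℤ} {m d : ℕ} (h1 : c'.1 ≤ c.1) (h2 : c.1 + m ≤ c'.1 + d)
    (h3 : c'.2 ≤ c.2) (h4 : c.2 + m ≤ c'.2 + d) : square c m ⊆ square c' d := by
  intro q hq
  simp only [square, Set.mem_ofPred_eq] at hq ⊢
  omega

lemma disjoint_square_mul {n : ℕ} {B B' : ℤ} (h : B ≠ B') (y y' : ℤ) :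
    Disjoint (square (n * B, y) n) (square (n * B', y') n) := by
  refine Set.disjoint_left.2 fun q hq hq' => h ?_
  simp only [square, Set.mem_ofPred_eq] at hq hq'
  have h1 : B < B' + 1 := Int.lt_of_mul_lt_mul_left (a := n) (by linarith) (Int.natCast_nonneg _)
  have h2 : B' < B + 1 := Int.lt_of_mul_lt_mul_left (a := n) (by linarith) (Int.natCast_nonneg _)
  omega

/-- If `A ⊆ [0,1]` contains an irrational number, then for every `n ≥ 1` there are
`d ≥ 1` and a configuration `x ∈ S''_A` such that every `d × d` pattern of `x`
contains at least `n^n` pairwise different, pairwise disjoint `n × n` patterns. -/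
theorem exists_config_with_many_patterns (A : Set ℝ) (hA : A ⊆ Set.Icc (0 : ℝ) 1)
    (hirr : ∃ α ∈ A, Irrational α) :
    ∀ n : ℕ, 1 ≤ n → ∃ d : ℕ, 1 ≤ d ∧ ∃ x ∈ sturmianRows A,
      ∀ a b : ℤ, ∃ p : Fin (n ^ n) → ℤ × ℤ,
        (∀ k, square (p k) n ⊆ square (a, b) d) ∧
        (∀ k l, k ≠ l → Disjoint (square (p k) n) (square (p l) n)) ∧
        (∀ k l, k ≠ l →
          (fun (i j : Fin n) => x ((p k).1 + (i : ℕ), (p k).2 + (j : ℕ))) ≠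
          (fun (i j : Fin n) => x ((p l).1 + (i : ℕ), (p l).2 + (j : ℕ)))) := by
  obtain ⟨α, hαA, hα⟩ := hirr
  have hα0 : 0 ≤ α := (hA hαA).1
  have hα1 : α < 1 := (hA hαA).2.lt_of_ne hα.ne_one
  intro n hn
  let ρ : ℕ → ℝ := fun t => Int.fract (-(t * α))
  obtain ⟨R, hR⟩ := hα.exists_forall_exists_sturmian_intCast_add_eq (fun t : Fin n => ρ t) n
  let x : ℤ × ℤ → Bool := fun q => sturmian α (ρ (blockDigit n q.1)) q.2
  refine ⟨n * (n ^ n + 1) + R, by nlinarith [Nat.one_le_pow n n hn], x,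
    ⟨α, hαA, fun m =>
      ⟨ρ (blockDigit n m), ⟨Int.fract_nonneg _, (Int.fract_lt_one _).le⟩, fun _ => rfl⟩⟩,
    fun a b => ?_⟩
  obtain ⟨c, ⟨hbc, hcR⟩, hc⟩ := hR b
  choose B hBk hBa hBd using fun k : Fin (n ^ n) =>
    exists_emod_eq_and_mul_mem hn a k.isLt
  have hB : Function.Injective B := fun k l h =>
    Fin.ext (by exact_mod_cast (hBk k).symm.trans (h ▸ hBk l))
  have hpattern : ∀ k (i j : Fin n),
      x (n * B k + (i : ℕ), c + (j : ℕ)) = sturmian α (ρ (finFunctionFinEquiv.symm k i)) j := by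
    intro k i j
    simp only [x, blockDigit_mul_add hn k i (hBk k)]
    exact hc _ j
  refine ⟨fun k => (n * B k, c), fun k => square_subset_square (hBa k) ?_ hbc ?_,
    fun k l hkl => disjoint_square_mul (hB.ne hkl) c c, fun k l hkl heq => hkl ?_⟩
  · have := hBd k
    push_cast at this ⊢
    linarith
  · have : (0 : ℤ) ≤ n * n ^ n := by positivity
    push_cast
    linarith
  refine finFunctionFinEquiv.symm.injective (funext fun i =>
    hα.injective_sturmian_fract_neg_mul hα0 hα1 n (funext fun j => ?_))
  simpa only [hpattern] using congrFun (congrFun heq i) j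
end

section
/- Let A ⊆ [0,1] be nonempty. For each natural number n ≥ 1, let N(n) be the number of distinct functions P : {0,…,n−1}² → {0,1} that occur as n×n patterns of configurations in S''_A, i.e., such that there exist x ∈ S''_A and (a,b) ∈ ℤ² with P(i,j) = x(a + i, b + j) for all 0 ≤ i,j < n. Then N(n) is finite and (log N(n))/n² tends to 0 as n tends to infinity. -/
/-- The set of `n × n` patterns occurring in configurations of `S''_A`. -/
def patterns (A : Set ℝ) (n : ℕ) : Set (Fin n → Fin n → Bool) :=
  {P | ∃ x ∈ sturmianRows A, ∃ a b : ℤ, ∀ i j : Fin n,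
        P i j = x (a + (i : ℕ), b + (j : ℕ))}

/-- `N(n)`: the number of distinct `n × n` patterns of configurations in `S''_A`. -/
noncomputable def patternCount (A : Set ℝ) (n : ℕ) : ℕ :=
  (patterns A n).ncard

/-! ### Auxiliary machinery for counting patterns -/

/-- Decoding map: from a triple of "codes" (`F` = integer parts of `j·α`,
`g` = rank of the threshold `τ j` among the row intercepts, `h` = rank of each row's
intercept) we reconstruct an `n × n` pattern. Every pattern in `patterns A n` is in the
range of this map, which yields the polynomial bound on the number of patterns. -/
def sturmDecode (n : ℕ)
    (c : (Fin (n+1) → Fin (n+2)) × (Fin (n+1) → Fin (n+2)) × (Fin n → Fin (n+2))) :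
    Fin n → Fin n → Bool :=
  fun i j =>
    decide ((c.1 j.succ : ℕ) + (if (c.2.1 j.succ : ℕ) ≤ (c.2.2 i : ℕ) then 1 else 0)
      = (c.1 j.castSucc : ℕ) + (if (c.2.1 j.castSucc : ℕ) ≤ (c.2.2 i : ℕ) then 1 else 0) + 1)

lemma sturmian_eq_decide (α ρ : ℝ) (h0 : 0 ≤ α) (h1 : α ≤ 1) (m : ℤ) :
    sturmian α ρ m = decide (⌊ρ + m * α + α⌋ = ⌊ρ + m * α⌋ + 1) := by
  set x := ρ + m * α with hx
  have hsplit : ⌊x + α⌋ = ⌊x⌋ + ⌊Int.fract x + α⌋ := by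
    conv_lhs => rw [← Int.floor_add_fract x, add_assoc, Int.floor_intCast_add]
  have hf0 : 0 ≤ Int.fract x := Int.fract_nonneg x
  have hf1 : Int.fract x < 1 := Int.fract_lt_one x
  unfold sturmian
  rw [← hx]
  by_cases h : Int.fract x < 1 - α
  · rw [if_pos h]
    have hz : ⌊Int.fract x + α⌋ = 0 := by
      rw [Int.floor_eq_iff] <;> constructor <;> push_cast <;> linarith
    symm
    rw [decide_eq_false_iff_not, hsplit, hz]
    omega
  · rw [if_neg h]
    push_neg at h
    have hz : ⌊Int.fract x + α⌋ = 1 := by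
      rw [Int.floor_eq_iff] <;> constructor <;> push_cast <;> linarith
    symm
    rw [decide_eq_true_eq, hsplit, hz]

lemma patterns_subset_range (A : Set ℝ) (hA : A ⊆ Set.Icc (0 : ℝ) 1) (n : ℕ) :
    patterns A n ⊆ Set.range (sturmDecode n) := by
  classical
  rintro P ⟨x, ⟨α, hαA, hx⟩, a, b, hP⟩
  obtain ⟨hα0, hα1⟩ := hA hαA
  choose ρ hρmem hρ using hx
  set t : Fin n → ℝ := fun i => Int.fract (ρ (a + (i : ℕ)) + (b : ℝ) * α) with ht
  have ht0 : ∀ i, 0 ≤ t i := fun i => Int.fract_nonneg _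
  have ht1 : ∀ i, t i < 1 := fun i => Int.fract_lt_one _
  set Fl : ℕ → ℤ := fun j => ⌊(j : ℝ) * α⌋ with hFl
  set τ : ℕ → ℝ := fun j => (Fl j : ℝ) + 1 - (j : ℝ) * α with hτ
  -- decomposition of the inner floors
  have hD : ∀ (i : Fin n) (j : ℕ),
      ⌊(j : ℝ) * α + t i⌋ = Fl j + (if τ j ≤ t i then 1 else 0) := by
    intro i j
    have hle : (Fl j : ℝ) ≤ (j : ℝ) * α := Int.floor_le _
    have hlt : (j : ℝ) * α < (Fl j : ℝ) + 1 := Int.lt_floor_add_one _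
    by_cases hc : τ j ≤ t i
    · have hc' : (Fl j : ℝ) + 1 - (j : ℝ) * α ≤ t i := hc
      rw [if_pos hc, Int.floor_eq_iff]
      constructor
      · push_cast
        linarith
      · push_cast
        linarith [ht1 i]
    · rw [if_neg hc, Int.floor_eq_iff]
      push_neg at hc
      have hc' : t i < (Fl j : ℝ) + 1 - (j : ℝ) * α := hc
      constructor
      · push_cast
        linarith [ht0 i]
      · push_cast
        linarith
  -- relating the floors at positions b + j to the inner floors
  have hfloor : ∀ (i : Fin n) (j : ℕ),
      ⌊ρ (a + (i : ℕ)) + ((b : ℝ) + (j : ℕ)) * α⌋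
        = ⌊ρ (a + (i : ℕ)) + (b : ℝ) * α⌋ + ⌊(j : ℝ) * α + t i⌋ := by
    intro i j
    have he : ρ (a + (i : ℕ)) + ((b : ℝ) + (j : ℕ)) * α
        = (⌊ρ (a + (i : ℕ)) + (b : ℝ) * α⌋ : ℝ) + ((j : ℝ) * α + t i) := by
      rw [ht]
      have := Int.floor_add_fract (ρ (a + (i : ℕ)) + (b : ℝ) * α)
      ring_nf
      ring_nf at this
      linarith
    rw [he, Int.floor_intCast_add]
  -- formula for the pattern entries
  have hPf : ∀ (i j : Fin n),
      P i j = decide (Fl ((j : ℕ) + 1) + (if τ ((j : ℕ) + 1) ≤ t i then 1 else 0)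
        = Fl (j : ℕ) + (if τ (j : ℕ) ≤ t i then 1 else 0) + 1) := by
    intro i j
    rw [hP i j, hρ (a + (i : ℕ)) (b + (j : ℕ)),
      sturmian_eq_decide α _ hα0 hα1 (b + (j : ℕ)), decide_eq_decide]
    have e1 : ρ (a + (i : ℕ)) + ((b + (j : ℕ) : ℤ) : ℝ) * α + α
        = ρ (a + (i : ℕ)) + ((b : ℝ) + (((j : ℕ) + 1 : ℕ) : ℝ)) * α := by
      push_cast; ring
    have e2 : ρ (a + (i : ℕ)) + ((b + (j : ℕ) : ℤ) : ℝ) * α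
        = ρ (a + (i : ℕ)) + ((b : ℝ) + ((j : ℕ) : ℝ)) * α := by
      push_cast; ring
    rw [e1, e2, hfloor i ((j : ℕ) + 1), hfloor i (j : ℕ), hD i ((j : ℕ) + 1), hD i (j : ℕ)]
    push_cast
    constructor <;> intro hh <;> omega
  -- the rank functions
  set Gc : ℕ → ℕ := fun j => (Finset.univ.filter (fun i' : Fin n => t i' < τ j)).card with hGc
  set Hc : Fin n → ℕ := fun i => (Finset.univ.filter (fun i' : Fin n => t i' < t i)).card with hHc
  have hGH : ∀ (i : Fin n) (j : ℕ), τ j ≤ t i ↔ Gc j ≤ Hc i := by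
    intro i j
    constructor
    · intro hle
      apply Finset.card_le_card
      intro i' hi'
      simp only [Finset.mem_filter, Finset.mem_univ, true_and] at hi' ⊢
      exact lt_of_lt_of_le hi' hle
    · intro hle
      by_contra hlt
      push_neg at hlt
      have hsub : insert i (Finset.univ.filter (fun i' : Fin n => t i' < t i))
          ⊆ Finset.univ.filter (fun i' : Fin n => t i' < τ j) := by
        intro i' hi'
        rcases Finset.mem_insert.1 hi' with hh | hh
        · subst hh
          simp only [Finset.mem_filter, Finset.mem_univ, true_and]
          exact hlt
        · simp only [Finset.mem_filter, Finset.mem_univ, true_and] at hh ⊢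
          exact lt_trans hh hlt
      have hnot : i ∉ Finset.univ.filter (fun i' : Fin n => t i' < t i) := by
        simp [lt_irrefl]
      have hcard := Finset.card_le_card hsub
      rw [Finset.card_insert_of_notMem hnot] at hcard
      have hcard' : Hc i + 1 ≤ Gc j := hcard
      omega
  -- bounds for the codes
  have hFl0 : ∀ j : ℕ, 0 ≤ Fl j := by
    intro j
    apply Int.floor_nonneg.2
    positivity
  have hFlle : ∀ j : ℕ, j ≤ n → (Fl j).toNat < n + 2 := by
    intro j hj
    have h1 : (j : ℝ) * α ≤ (n : ℝ) := by
      calc (j : ℝ) * α ≤ (j : ℝ) * 1 := by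
            apply mul_le_mul_of_nonneg_left hα1 (by positivity)
        _ = (j : ℝ) := by ring
        _ ≤ (n : ℝ) := by exact_mod_cast hj
    have h2 : Fl j ≤ (n : ℤ) := by
      rw [hFl]
      have := Int.floor_le_floor h1
      rwa [Int.floor_natCast] at this
    omega
  have hGcle : ∀ j : ℕ, Gc j < n + 2 := by
    intro j
    have h1 := Finset.card_filter_le (Finset.univ : Finset (Fin n)) (fun i' : Fin n => t i' < τ j)
    simp only [Finset.card_univ, Fintype.card_fin] at h1
    have h2 : Gc j ≤ n := h1
    omega
  have hHcle : ∀ i : Fin n, Hc i < n + 2 := by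
    intro i
    have h1 := Finset.card_filter_le (Finset.univ : Finset (Fin n)) (fun i' : Fin n => t i' < t i)
    simp only [Finset.card_univ, Fintype.card_fin] at h1
    have h2 : Hc i ≤ n := h1
    omega
  -- assemble the code
  refine ⟨⟨fun j => ⟨(Fl (j : ℕ)).toNat, hFlle (j : ℕ) (Nat.lt_succ_iff.1 j.isLt)⟩,
    fun j => ⟨Gc (j : ℕ), hGcle (j : ℕ)⟩, fun i => ⟨Hc i, hHcle i⟩⟩, ?_⟩
  funext i j
  simp only [sturmDecode, Fin.val_succ, Fin.coe_castSucc]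
  rw [hPf i j, decide_eq_decide]
  simp only [hGH i ((j : ℕ) + 1), hGH i (j : ℕ)]
  have e1 := hFl0 ((j : ℕ) + 1)
  have e2 := hFl0 (j : ℕ)
  by_cases h1 : Gc ((j : ℕ) + 1) ≤ Hc i <;> by_cases h2 : Gc (j : ℕ) ≤ Hc i <;>
    simp only [h1, h2, if_true, if_false] <;> omega

lemma patternCount_le (A : Set ℝ) (hA : A ⊆ Set.Icc (0 : ℝ) 1) (n : ℕ) :
    patternCount A n ≤ (n + 2) ^ (3 * n + 2) := by
  have hsub := patterns_subset_range A hA n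
  calc patternCount A n = (patterns A n).ncard := rfl
    _ ≤ (Set.range (sturmDecode n)).ncard :=
        Set.ncard_le_ncard hsub (Set.finite_range _)
    _ ≤ (Set.univ : Set ((Fin (n+1) → Fin (n+2)) × (Fin (n+1) → Fin (n+2)) ×
          (Fin n → Fin (n+2)))).ncard := by
        have : Set.range (sturmDecode n) =
            (fun c => sturmDecode n c) '' Set.univ := by simp [Set.image_univ]
        rw [this]
        exact Set.ncard_image_le Set.finite_univ
    _ = (n + 2) ^ (3 * n + 2) := by
        rw [Set.ncard_univ, Nat.card_eq_fintype_card]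
        simp only [Fintype.card_prod, Fintype.card_fun, Fintype.card_fin]
        rw [← pow_add, ← pow_add]
        congr 1
        omega

/-- The subshift `S''_A` has zero entropy: the number `N(n)` of its `n × n` patterns
is finite and `log N(n) / n² → 0`. -/
theorem entropy_sturmianRows_eq_zero (A : Set ℝ) (hA : A ⊆ Set.Icc (0 : ℝ) 1)
    (hne : A.Nonempty) :
    (∀ n : ℕ, (patterns A n).Finite) ∧
    Filter.Tendsto (fun n : ℕ => Real.log (patternCount A n) / (n : ℝ) ^ 2)
      Filter.atTop (nhds 0) := by
  constructor
  · intro n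
    exact (Set.finite_range (sturmDecode n)).subset (patterns_subset_range A hA n)
  · have hlog : ∀ n : ℕ, Real.log (patternCount A n)
        ≤ ((3 * n + 2 : ℕ) : ℝ) * Real.log ((n : ℝ) + 2) := by
      intro n
      have hlogpos : 0 ≤ Real.log ((n : ℝ) + 2) := Real.log_nonneg (by push_cast; linarith)
      rcases Nat.eq_zero_or_pos (patternCount A n) with h | h
      · rw [h]
        simpa using mul_nonneg (by positivity) hlogpos
      · have hle : ((patternCount A n : ℕ) : ℝ) ≤ ((n : ℝ) + 2) ^ (3 * n + 2) := by
          have := patternCount_le A hA n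
          exact_mod_cast this
        calc Real.log (patternCount A n)
            ≤ Real.log (((n : ℝ) + 2) ^ (3 * n + 2)) :=
              Real.log_le_log (by exact_mod_cast h) hle
          _ = ((3 * n + 2 : ℕ) : ℝ) * Real.log ((n : ℝ) + 2) := Real.log_pow _ _
    have hlim : Filter.Tendsto (fun n : ℕ => 8 * (Real.log n / (n : ℝ)))
        Filter.atTop (nhds 0) := by
      have h1 := Real.isLittleO_log_id_atTop.tendsto_div_nhds_zero
      have h2 := h1.comp (tendsto_natCast_atTop_atTop (R := ℝ))
      have h3 := h2.const_mul (8 : ℝ)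
      simpa using h3
    apply squeeze_zero' ?_ ?_ hlim
    · apply Filter.Eventually.of_forall
      intro n
      apply div_nonneg _ (by positivity)
      rcases Nat.eq_zero_or_pos (patternCount A n) with h | h
      · simp [h]
      · exact Real.log_nonneg (by exact_mod_cast h)
    · rw [Filter.eventually_atTop]
      refine ⟨2, fun n hn => ?_⟩
      have h2n : (2 : ℝ) ≤ (n : ℝ) := by exact_mod_cast hn
      have hn0 : (n : ℝ) ≠ 0 := by linarith
      have hlogn : 0 ≤ Real.log n := Real.log_nonneg (by linarith)
      have hA1 : Real.log ((n : ℝ) + 2) ≤ 2 * Real.log n := by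
        have hle : (n : ℝ) + 2 ≤ (n : ℝ) * (n : ℝ) := by nlinarith
        calc Real.log ((n : ℝ) + 2) ≤ Real.log ((n : ℝ) * (n : ℝ)) :=
              Real.log_le_log (by linarith) hle
          _ = Real.log n + Real.log n := Real.log_mul hn0 hn0
          _ = 2 * Real.log n := by ring
      have hA2 : ((3 * n + 2 : ℕ) : ℝ) ≤ 4 * (n : ℝ) := by push_cast; linarith
      have hlogpos : 0 ≤ Real.log ((n : ℝ) + 2) := Real.log_nonneg (by linarith)
      have hnum : Real.log (patternCount A n) ≤ 8 * ((n : ℝ) * Real.log n) := by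
        calc Real.log (patternCount A n)
            ≤ ((3 * n + 2 : ℕ) : ℝ) * Real.log ((n : ℝ) + 2) := hlog n
          _ ≤ (4 * (n : ℝ)) * (2 * Real.log n) := by
              apply mul_le_mul hA2 hA1 hlogpos (by linarith)
          _ = 8 * ((n : ℝ) * Real.log n) := by ring
      calc Real.log (patternCount A n) / (n : ℝ) ^ 2
          ≤ 8 * ((n : ℝ) * Real.log n) / (n : ℝ) ^ 2 := by
            have hn2 : (0 : ℝ) < (n : ℝ) ^ 2 := by nlinarith
            exact (div_le_div_iff_of_pos_right hn2).mpr hnum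
          _ = 8 * (Real.log n / (n : ℝ)) := by
            field_simp
end
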